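/- Let S be an FSA with detector S_det and ε-extended self-composition CC^ε_A(S). The following are equivalent: (i) CC^ε_A(S) has a reachable state (x,x̄) with x≠x̄ such that there is a transition sequence x→^{s1}x'→^{s2}x' in S for some s1∈(T_uo)*, s2∈(T_uo)^+, x'∈X; (ii) there are a reachable state q' of S_det and x∈q' such that |q'|>1 and there is a transition sequence x→^{s1}x'→^{s2}x' in S for some s1∈(T_uo)*, s2∈(T_uo)^+, x'∈X. -/

import Mathlib

/-- A finite-state automaton (FSA) `S = (X, T, X0, δ, Σ, ℓ)`:
states `X`, events `T`, outputs `O` (the alphabet Σ), initial states `init`,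
transition relation `delta`, and labeling function `label` where `none` encodes ε. -/
structure FSA (X T O : Type) where
  init : Set X
  delta : X → T → X → Prop
  label : T → Option O

/-- Composed events of the (ε-extended) self-composition: pairs of observable
events with the same label, unobservable events on the left/right component,
and the added ε event. -/
inductive CEvent (T : Type) where
  | both : T → T → CEvent T
  | left : T → CEvent T
  | right : T → CEvent T
  | eps : CEvent T

namespace FSA

variable {X T O : Type}

/-- Extension of `delta` to finite event sequences: `x →^s x'`. -/
def Run (M : FSA X T O) : X → List T → X → Prop
  | x, [], x' => x = x'
  | x, t :: s, x' => ∃ y, M.delta x t y ∧ Run M y s x'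

/-- The label sequence `ℓ(s)` of a finite event sequence. -/
def labelSeq (M : FSA X T O) (s : List T) : List O :=
  s.filterMap M.label

/-- Membership in `L^ω(S)`: infinite event sequences generated from some initial state. -/
def InLomega (M : FSA X T O) (s : ℕ → T) : Prop :=
  ∃ x : ℕ → X, x 0 ∈ M.init ∧ ∀ i, M.delta (x i) (s i) (x (i + 1))

/-- `s'` is a finite prefix of the infinite sequence `s`. -/
def IsPrefixOf (s' : List T) (s : ℕ → T) : Prop :=
  ∀ i : Fin s'.length, s'.get i = s i

/-- The current-state estimate `M(S,σ)`. -/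
def est (M : FSA X T O) (σ : List O) : Set X :=
  {x | ∃ x0 ∈ M.init, ∃ s : List T, M.labelSeq s = σ ∧ M.Run x0 s x}

/-- Strong periodic detectability (SPD). -/
def SPD (M : FSA X T O) : Prop :=
  ∃ k : ℕ, 0 < k ∧ ∀ s : ℕ → T, M.InLomega s → ∀ s' : List T, IsPrefixOf s' s →
    ∃ s'' : List T, (M.labelSeq s'').length < k ∧ IsPrefixOf (s' ++ s'') s ∧
      (M.est (M.labelSeq (s' ++ s''))).ncard = 1

/-- Strong periodic D-detectability with respect to `Tspec`. -/
def SPDD (M : FSA X T O) (Tspec : Set (X × X)) : Prop :=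
  ∃ k : ℕ, 0 < k ∧ ∀ s : ℕ → T, M.InLomega s → ∀ s' : List T, IsPrefixOf s' s →
    ∃ s'' : List T, (M.labelSeq s'').length < k ∧ IsPrefixOf (s' ++ s'') s ∧
      (M.est (M.labelSeq (s' ++ s'')) ×ˢ M.est (M.labelSeq (s' ++ s''))) ∩ Tspec = ∅

/-- An unobservable transition sequence `x →^s x'` (all events labeled ε). -/
def UnobsRun (M : FSA X T O) (x : X) (s : List T) (x' : X) : Prop :=
  M.Run x s x' ∧ ∀ t ∈ s, M.label t = none

/-- Unobservable reach `UR` of a set of states. -/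
def UR (M : FSA X T O) (q : Set X) : Set X :=
  {x' | ∃ x ∈ q, ∃ s : List T, M.UnobsRun x s x'}

/-- Observable reach `Reach_σ` of a set of states. -/
def ReachO (M : FSA X T O) (σ : O) (q : Set X) : Set X :=
  {x' | ∃ x ∈ q, ∃ t : T, M.delta x t x' ∧ M.label t = some σ}

/-- Initial state `M(S,ε) = UR(X0)` of the observer/detector. -/
def obsInit (M : FSA X T O) : Set X := M.UR M.init

/-- Observer transition `δ_obs(q,σ) = UR(Reach_σ(q))` (defined when nonempty). -/
def obsTrans (M : FSA X T O) (q : Set X) (σ : O) (q' : Set X) : Prop :=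
  q' = M.UR (M.ReachO σ q) ∧ q'.Nonempty

/-- Sequences of observer transitions. -/
def ObsRun (M : FSA X T O) : Set X → List O → Set X → Prop
  | q, [], q' => q = q'
  | q, σ :: w, q' => ∃ q1, M.obsTrans q σ q1 ∧ ObsRun M q1 w q'

/-- Reachable states of the observer `S_obs`. -/
def ObsReachable (M : FSA X T O) (q : Set X) : Prop :=
  ∃ w : List O, M.ObsRun M.obsInit w q

/-- Detector transition relation `δ_det`. -/
def detTrans (M : FSA X T O) (q : Set X) (σ : O) (q' : Set X) : Prop :=
  (1 < (M.UR (M.ReachO σ q)).ncard ∧ q' ⊆ M.UR (M.ReachO σ q) ∧ q'.ncard = 2) ∨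
  ((M.UR (M.ReachO σ q)).ncard = 1 ∧ q' = M.UR (M.ReachO σ q))

/-- Sequences of detector transitions. -/
def DetRun (M : FSA X T O) : Set X → List O → Set X → Prop
  | q, [], q' => q = q'
  | q, σ :: w, q' => ∃ q1, M.detTrans q σ q1 ∧ DetRun M q1 w q'

/-- Reachable states of the detector `S_det`. -/
def DetReachable (M : FSA X T O) (q : Set X) : Prop :=
  ∃ w : List O, M.DetRun M.obsInit w q

/-- The label of a composed event. -/
def cLabel (M : FSA X T O) : CEvent T → Option O
  | CEvent.both t _ => M.label t
  | CEvent.left _ => none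
  | CEvent.right _ => none
  | CEvent.eps => none

/-- The label sequence of a sequence of composed events. -/
def ccLabelSeq (M : FSA X T O) (s : List (CEvent T)) : List O :=
  s.filterMap M.cLabel

/-- Transition relation `δ'` of the self-composition `CC_A(S)`. -/
def ccTrans (M : FSA X T O) : X × X → CEvent T → X × X → Prop
  | p, CEvent.both t t', p' =>
      M.delta p.1 t p'.1 ∧ M.delta p.2 t' p'.2 ∧
      ∃ σ : O, M.label t = some σ ∧ M.label t' = some σ
  | p, CEvent.left t, p' => M.delta p.1 t p'.1 ∧ M.label t = none ∧ p.2 = p'.2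
  | p, CEvent.right t, p' => p.1 = p'.1 ∧ M.label t = none ∧ M.delta p.2 t p'.2
  | _, CEvent.eps, _ => False

/-- Transition relation of the ε-extended self-composition `CC^ε_A(S)`:
all transitions of `CC_A(S)` plus, for `x1 ≠ x2`, the added ε-transitions
`((x1,x2),ε,(x1,x1))` and `((x1,x2),ε,(x2,x2))` under the stated conditions. -/
def ccEpsTrans (M : FSA X T O) (p : X × X) (e : CEvent T) (p' : X × X) : Prop :=
  M.ccTrans p e p' ∨
  (e = CEvent.eps ∧ p.1 ≠ p.2 ∧ (p' = (p.1, p.1) ∨ p' = (p.2, p.2)) ∧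
    ∃ (t' : CEvent T) (r : X × X),
      M.ccTrans p' t' r ∧ ∀ t'' : CEvent T, ¬ M.ccTrans p t'' r)

/-- Sequences of transitions of `CC^ε_A(S)`. -/
def CCRun (M : FSA X T O) : X × X → List (CEvent T) → X × X → Prop
  | p, [], p' => p = p'
  | p, e :: s, p' => ∃ r, M.ccEpsTrans p e r ∧ CCRun M r s p'

/-- Reachable states of `CC^ε_A(S)` (from `X0 × X0`). -/
def CCReachable (M : FSA X T O) (p : X × X) : Prop :=
  ∃ p0 : X × X, p0.1 ∈ M.init ∧ p0.2 ∈ M.init ∧ ∃ s : List (CEvent T), M.CCRun p0 s p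

/-- A state is reachable in `S`. -/
def StateReachable (M : FSA X T O) (x : X) : Prop :=
  ∃ x0 ∈ M.init, ∃ s : List T, M.Run x0 s x

/-- Deadlock-freeness. -/
def DeadlockFree (M : FSA X T O) : Prop :=
  ∀ x : X, M.StateReachable x → ∃ (t : T) (x' : X), M.delta x t x'

/-- Divergence-freeness (promptness): no reachable unobservable transition cycle. -/
def DivergenceFree (M : FSA X T O) : Prop :=
  ∀ x : X, M.StateReachable x → ∀ s : List T, s ≠ [] →
    (∀ t ∈ s, M.label t = none) → ¬ M.Run x s x

end FSA

/-!
Both sides say that some `x̄ ≠ x` is consistent with `x` under a common observation `w`, i.e.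
`x, x̄ ∈ M(S,w)`. For the self-composition this holds because a run of `CC_A(S)` is a pair of runs
of `S` with the same observation, while the added ε-transitions only jump to diagonal states.
For the detector, every detector state along `w` lies inside `M(S,w)`, and conversely any two
states of `M(S,w)` can be kept together along `w`, since each detector step may pick any
two-element subset of the observer successor. The unobservable cycle starting at `x` is carried
along unchanged.
-/

namespace FSA

variable {X T O : Type} {M : FSA X T O}

lemma run_append {a c : X} {s s' : List T} :
    M.Run a (s ++ s') c ↔ ∃ b, M.Run a s b ∧ M.Run b s' c := by
  induction s generalizing a with
  | nil => simp [Run]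
  | cons t s ih => simp only [List.cons_append, Run, ih]; grind

lemma labelSeq_append (s s' : List T) : M.labelSeq (s ++ s') = M.labelSeq s ++ M.labelSeq s' :=
  List.filterMap_append

lemma labelSeq_singleton (t : T) : M.labelSeq [t] = (M.label t).toList := by
  cases h : M.label t <;> simp [labelSeq, h]

lemma labelSeq_eq_nil_iff {s : List T} : M.labelSeq s = [] ↔ ∀ t ∈ s, M.label t = none :=
  List.filterMap_eq_nil_iff

lemma unobsRun_iff {x y : X} {s : List T} :
    M.UnobsRun x s y ↔ M.Run x s y ∧ M.labelSeq s = [] := by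
  rw [UnobsRun, labelSeq_eq_nil_iff]

lemma UR_mono {q q' : Set X} (h : q ⊆ q') : M.UR q ⊆ M.UR q' :=
  fun _ ⟨x, hx, hs⟩ => ⟨x, h hx, hs⟩

lemma ReachO_mono (σ : O) {q q' : Set X} (h : q ⊆ q') : M.ReachO σ q ⊆ M.ReachO σ q' :=
  fun _ ⟨x, hx, ht⟩ => ⟨x, h hx, ht⟩

lemma mem_est_append {w : List O} {x y : X} {s : List T} (hx : x ∈ M.est w) (h : M.Run x s y) :
    y ∈ M.est (w ++ M.labelSeq s) := by
  obtain ⟨x0, hx0, s0, rfl, hs0⟩ := hx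
  exact ⟨x0, hx0, s0 ++ s, labelSeq_append s0 s, run_append.2 ⟨x, hs0, h⟩⟩

lemma mem_est_append_of_delta {w : List O} {x y : X} {t : T} (hx : x ∈ M.est w)
    (h : M.delta x t y) : y ∈ M.est (w ++ (M.label t).toList) := by
  rw [← labelSeq_singleton]
  exact mem_est_append hx ⟨y, h, rfl⟩

lemma mem_est_of_unobsRun {w : List O} {x y : X} {s : List T} (hx : x ∈ M.est w)
    (h : M.UnobsRun x s y) : y ∈ M.est w := by
  rw [unobsRun_iff] at h
  simpa [h.2] using mem_est_append hx h.1

lemma est_nil : M.est [] = M.obsInit := by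
  ext x
  simp only [est, obsInit, UR, unobsRun_iff]
  grind

lemma est_append_singleton (w : List O) (σ : O) :
    M.est (w ++ [σ]) = M.UR (M.ReachO σ (M.est w)) := by
  ext x
  constructor
  · rintro ⟨x0, hx0, s, hs, hrun⟩
    obtain ⟨s₁, s₂, rfl, hs₁, hs₂⟩ := List.filterMap_eq_append_iff.1 hs
    obtain ⟨u, t, v, rfl, hu, ht, hv⟩ := List.filterMap_eq_cons_iff.1 hs₂
    obtain ⟨b, hb, hrun⟩ := run_append.1 hrun
    obtain ⟨b', hb', c, hc, hv'⟩ := run_append.1 hrun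
    have hb'w : b' ∈ M.est w := mem_est_of_unobsRun ⟨x0, hx0, s₁, hs₁, hb⟩ ⟨hb', hu⟩
    exact ⟨c, ⟨b', hb'w, t, hc, ht⟩, v, hv', List.filterMap_eq_nil_iff.1 hv⟩
  · rintro ⟨c, ⟨b, hb, t, hc, ht⟩, s, hs⟩
    have := mem_est_of_unobsRun (mem_est_append_of_delta hb hc) hs
    rwa [ht] at this

lemma detRun_append {q q' : Set X} {w w' : List O} :
    M.DetRun q (w ++ w') q' ↔ ∃ q₁, M.DetRun q w q₁ ∧ M.DetRun q₁ w' q' := by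
  induction w generalizing q with
  | nil => simp [DetRun]
  | cons σ w ih => simp only [List.cons_append, DetRun, ih]; grind

lemma detRun_append_singleton {q q' : Set X} {w : List O} {σ : O} :
    M.DetRun q (w ++ [σ]) q' ↔ ∃ q₁, M.DetRun q w q₁ ∧ M.detTrans q₁ σ q' := by
  simp [detRun_append, DetRun]

lemma detTrans.subset {q q' : Set X} {σ : O} (h : M.detTrans q σ q') :
    q' ⊆ M.UR (M.ReachO σ q) := by
  rcases h with ⟨-, h, -⟩ | ⟨-, rfl⟩
  exacts [h, subset_rfl]

lemma detRun_obsInit_subset_est {w : List O} {q : Set X} (h : M.DetRun M.obsInit w q) :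
    q ⊆ M.est w := by
  induction w using List.reverseRecOn generalizing q with
  | nil => rw [est_nil]; exact h.symm.subset
  | append_singleton w σ ih =>
    obtain ⟨q₁, hq₁, ht⟩ := detRun_append_singleton.1 h
    rw [est_append_singleton]
    exact ht.subset.trans (UR_mono (ReachO_mono σ (ih hq₁)))

lemma exists_detTrans_mem [Finite X] {q : Set X} {σ : O} {a b : X}
    (ha : a ∈ M.UR (M.ReachO σ q)) (hb : b ∈ M.UR (M.ReachO σ q)) :
    ∃ q', M.detTrans q σ q' ∧ a ∈ q' ∧ b ∈ q' := by
  set U := M.UR (M.ReachO σ q)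
  by_cases hU : 1 < U.ncard
  · have hab : ({a, b} : Set X) ⊆ U := Set.insert_subset ha (Set.singleton_subset_iff.2 hb)
    obtain ⟨P, habP, hPU, hP⟩ :=
      Set.exists_subsuperset_card_eq hab ((Set.ncard_insert_le a {b}).trans (by simp)) hU
    exact ⟨P, Or.inl ⟨hU, hPU, hP⟩, habP (by simp), habP (by simp)⟩
  · have : 0 < U.ncard := (Set.ncard_pos U.toFinite).2 ⟨a, ha⟩
    have hU1 : U.ncard = 1 := by omega
    exact ⟨U, Or.inr ⟨hU1, rfl⟩, ha, hb⟩

lemma exists_detRun_of_mem_est [Finite X] {w : List O} {x y : X} (hx : x ∈ M.est w)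
    (hy : y ∈ M.est w) : ∃ q, M.DetRun M.obsInit w q ∧ x ∈ q ∧ y ∈ q := by
  induction w using List.reverseRecOn generalizing x y with
  | nil => rw [est_nil] at hx hy; exact ⟨M.obsInit, rfl, hx, hy⟩
  | append_singleton w σ ih =>
    rw [est_append_singleton] at hx hy
    obtain ⟨c, ⟨b, hb, t, hbc, ht⟩, hcx⟩ := hx
    obtain ⟨c', ⟨b', hb', t', hbc', ht'⟩, hcy⟩ := hy
    obtain ⟨q, hq, hbq, hb'q⟩ := ih hb hb'
    obtain ⟨q', hqq', hxq', hyq'⟩ :=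
      exists_detTrans_mem ⟨c, ⟨b, hbq, t, hbc, ht⟩, hcx⟩ ⟨c', ⟨b', hb'q, t', hbc', ht'⟩, hcy⟩
    exact ⟨q', detRun_append_singleton.2 ⟨q, hq, hqq'⟩, hxq', hyq'⟩

lemma CCReachable.of_ccEpsTrans {p r : X × X} {e : CEvent T} (hp : M.CCReachable p)
    (h : M.ccEpsTrans p e r) : M.CCReachable r := by
  obtain ⟨p₀, h₁, h₂, cs, hcs⟩ := hp
  refine ⟨p₀, h₁, h₂, cs ++ [e], ?_⟩
  clear h₁ h₂
  induction cs generalizing p₀ with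
  | nil => exact ⟨r, hcs ▸ h, rfl⟩
  | cons e' cs ih =>
    obtain ⟨p₁, h₀₁, h₁p⟩ := hcs
    exact ⟨p₁, h₀₁, ih p₁ h₁p⟩

lemma CCReachable.unobsRun_left {a a' b : X} {s : List T} (hp : M.CCReachable (a, b))
    (h : M.UnobsRun a s a') : M.CCReachable (a', b) := by
  induction s generalizing a with
  | nil => exact h.1 ▸ hp
  | cons t s ih =>
    obtain ⟨⟨c, hac, hc⟩, hs⟩ := h
    have hcb : M.CCReachable (c, b) :=
      hp.of_ccEpsTrans (e := CEvent.left t) (Or.inl ⟨hac, hs t (by simp), rfl⟩)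
    exact ih hcb ⟨hc, fun t' ht' => hs t' (by simp [ht'])⟩

lemma CCReachable.unobsRun_right {a b b' : X} {s : List T} (hp : M.CCReachable (a, b))
    (h : M.UnobsRun b s b') : M.CCReachable (a, b') := by
  induction s generalizing b with
  | nil => exact h.1 ▸ hp
  | cons t s ih =>
    obtain ⟨⟨c, hbc, hc⟩, hs⟩ := h
    have hac : M.CCReachable (a, c) :=
      hp.of_ccEpsTrans (e := CEvent.right t) (Or.inl ⟨rfl, hs t (by simp), hbc⟩)
    exact ih hac ⟨hc, fun t' ht' => hs t' (by simp [ht'])⟩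

lemma ccReachable_of_mem_UR {q q' : Set X} (h : ∀ a ∈ q, ∀ b ∈ q', M.CCReachable (a, b)) :
    ∀ a ∈ M.UR q, ∀ b ∈ M.UR q', M.CCReachable (a, b) := by
  rintro a ⟨a₀, ha₀, s, hs⟩ b ⟨b₀, hb₀, s', hs'⟩
  exact ((h a₀ ha₀ b₀ hb₀).unobsRun_left hs).unobsRun_right hs'

lemma ccReachable_of_mem_ReachO {q q' : Set X} (σ : O)
    (h : ∀ a ∈ q, ∀ b ∈ q', M.CCReachable (a, b)) :
    ∀ a ∈ M.ReachO σ q, ∀ b ∈ M.ReachO σ q', M.CCReachable (a, b) := by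
  rintro a ⟨a₀, ha₀, t, ht, hσ⟩ b ⟨b₀, hb₀, t', ht', hσ'⟩
  exact (h a₀ ha₀ b₀ hb₀).of_ccEpsTrans (e := CEvent.both t t') (Or.inl ⟨ht, ht', σ, hσ, hσ'⟩)

lemma ccReachable_of_mem_est {w : List O} {x y : X} (hx : x ∈ M.est w) (hy : y ∈ M.est w) :
    M.CCReachable (x, y) := by
  induction w using List.reverseRecOn generalizing x y with
  | nil =>
    rw [est_nil] at hx hy
    exact ccReachable_of_mem_UR (fun a ha b hb => ⟨(a, b), ha, hb, [], rfl⟩) x hx y hy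
  | append_singleton w σ ih =>
    rw [est_append_singleton] at hx hy
    exact ccReachable_of_mem_UR (ccReachable_of_mem_ReachO σ fun a ha b hb => ih ha hb) x hx y hy

lemma ccEpsTrans.mem_est {p r : X × X} {e : CEvent T} {w : List O} (h : M.ccEpsTrans p e r)
    (h₁ : p.1 ∈ M.est w) (h₂ : p.2 ∈ M.est w) :
    r.1 ∈ M.est (w ++ (M.cLabel e).toList) ∧ r.2 ∈ M.est (w ++ (M.cLabel e).toList) := by
  rcases h with h | ⟨rfl, -, rfl | rfl, -⟩
  · cases e with
    | both t t' =>
      obtain ⟨ht, ht', σ, hσ, hσ'⟩ := h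
      have h₂' := mem_est_append_of_delta h₂ ht'
      rw [hσ'] at h₂'
      exact ⟨mem_est_append_of_delta h₁ ht, by simpa [cLabel, hσ] using h₂'⟩
    | left t =>
      obtain ⟨ht, hσ, hr⟩ := h
      have h₁' := mem_est_append_of_delta h₁ ht
      rw [hσ] at h₁'
      exact ⟨by simpa [cLabel] using h₁', by simpa [cLabel, ← hr] using h₂⟩
    | right t =>
      obtain ⟨hr, hσ, ht⟩ := h
      have h₂' := mem_est_append_of_delta h₂ ht
      rw [hσ] at h₂'
      exact ⟨by simpa [cLabel, ← hr] using h₁, by simpa [cLabel] using h₂'⟩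
    | eps => exact h.elim
  · simpa [cLabel] using h₁
  · simpa [cLabel] using h₂

lemma CCRun.mem_est {p r : X × X} {cs : List (CEvent T)} {w : List O} (h : M.CCRun p cs r)
    (h₁ : p.1 ∈ M.est w) (h₂ : p.2 ∈ M.est w) :
    r.1 ∈ M.est (w ++ M.ccLabelSeq cs) ∧ r.2 ∈ M.est (w ++ M.ccLabelSeq cs) := by
  induction cs generalizing p w with
  | nil => cases h; simpa [ccLabelSeq] using ⟨h₁, h₂⟩
  | cons e cs ih =>
    obtain ⟨p₁, hp₁, hcs⟩ := h
    obtain ⟨h₁', h₂'⟩ := hp₁.mem_est h₁ h₂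
    have hlabel : M.ccLabelSeq (e :: cs) = (M.cLabel e).toList ++ M.ccLabelSeq cs := by
      cases h : M.cLabel e <;> simp [ccLabelSeq, h]
    simpa [hlabel] using ih hcs h₁' h₂'

lemma ccReachable_iff_exists_mem_est {p : X × X} :
    M.CCReachable p ↔ ∃ w, p.1 ∈ M.est w ∧ p.2 ∈ M.est w := by
  constructor
  · rintro ⟨p₀, h₁, h₂, cs, hcs⟩
    exact ⟨_, hcs.mem_est ⟨p₀.1, h₁, [], rfl, rfl⟩ ⟨p₀.2, h₂, [], rfl, rfl⟩⟩
  · rintro ⟨w, h₁, h₂⟩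
    exact ccReachable_of_mem_est h₁ h₂

end FSA

open FSA in
theorem cc_iff_detector_unobs_cycle_general {X T O : Type} [Fintype X]
    (M : FSA X T O) :
    (∃ p : X × X, M.CCReachable p ∧ p.1 ≠ p.2 ∧
        ∃ (x' : X) (s1 s2 : List T),
          M.UnobsRun p.1 s1 x' ∧ s2 ≠ [] ∧ M.UnobsRun x' s2 x') ↔
    (∃ q' : Set X, M.DetReachable q' ∧ 1 < q'.ncard ∧
        ∃ x ∈ q', ∃ (x' : X) (s1 s2 : List T),
          M.UnobsRun x s1 x' ∧ s2 ≠ [] ∧ M.UnobsRun x' s2 x') := by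
  constructor
  · rintro ⟨⟨x, y⟩, hp, hne, hcycle⟩
    obtain ⟨w, hx, hy⟩ := ccReachable_iff_exists_mem_est.1 hp
    obtain ⟨q, hq, hxq, hyq⟩ := exists_detRun_of_mem_est hx hy
    exact ⟨q, ⟨w, hq⟩, (Set.one_lt_ncard_iff).2 ⟨x, y, hxq, hyq, hne⟩, x, hxq, hcycle⟩
  · rintro ⟨q, ⟨w, hq⟩, hcard, x, hxq, hcycle⟩
    obtain ⟨y, hyq, hyx⟩ := Set.exists_ne_of_one_lt_ncard hcard x
    have hqw := detRun_obsInit_subset_est hq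
    exact ⟨(x, y), ccReachable_iff_exists_mem_est.2 ⟨w, hqw hxq, hqw hyq⟩, hyx.symm, hcycle⟩

/-- `CC^ε_A(S)` has a reachable state `(x,x̄)` with `x ≠ x̄` from whose
left component a reachable unobservable transition cycle starts iff the detector has
a reachable state `q'` with `|q'| > 1` containing such a state `x`. -/
theorem cc_iff_detector_unobs_cycle {X T O : Type} [Fintype X] [Fintype T] [Fintype O]
    (M : FSA X T O) :
    (∃ p : X × X, M.CCReachable p ∧ p.1 ≠ p.2 ∧
        ∃ (x' : X) (s1 s2 : List T),
          M.UnobsRun p.1 s1 x' ∧ s2 ≠ [] ∧ M.UnobsRun x' s2 x') ↔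
    (∃ q' : Set X, M.DetReachable q' ∧ 1 < q'.ncard ∧
        ∃ x ∈ q', ∃ (x' : X) (s1 s2 : List T),
          M.UnobsRun x s1 x' ∧ s2 ≠ [] ∧ M.UnobsRun x' s2 x') :=
  cc_iff_detector_unobs_cycle_general M
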